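/- arXiv:1209.4975 — 3 statements merged into one kernel-verified Lean document; each statement's English description precedes it below -/
import Mathlib

section
/- The family I_X = {I ⊆ U : R̲(I) ⊆ X} satisfies the matroid exchange axiom: if I₁, I₂ ∈ I_X and |I₁| < |I₂|, then there exists u ∈ I₂ \ I₁ such that I₁ ∪ {u} ∈ I_X. -/
open Finset

variable {α : Type*} [Fintype α] [DecidableEq α]

/-- The lower approximation of `S` w.r.t. the equivalence relation `R`:
`{x : [x]_R ⊆ S}`. -/
def lowerApprox (R : Setoid α) [DecidableRel R.r] (S : Finset α) : Finset α :=
  Finset.univ.filter fun x => ∀ y, R.r x y → y ∈ S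

/-!
Suppose no `u ∈ I₂ \ I₁` can be added to `I₁`. Then for each such `u` some `x ∉ X` has its class
inside `I₁ ∪ {u}`; as `x ∉ R̲(I₁)` the class is that of `u`, and as `x ∉ R̲(I₂)` it contains some
`f u ∈ I₁ \ I₂`. The class of `u` meets `I₂ \ I₁` only in `u`, so `f` is injective, giving
`|I₂ \ I₁| ≤ |I₁ \ I₂|`, i.e. `|I₂| ≤ |I₁|`.
-/

section

variable {R : Setoid α} [DecidableRel R.r]

theorem mem_lowerApprox {S : Finset α} {x : α} :
    x ∈ lowerApprox R S ↔ ∀ y, R.r x y → y ∈ S := by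
  simp [lowerApprox]

theorem mem_lowerApprox_of_rel {S : Finset α} {x y : α} (hx : x ∈ lowerApprox R S)
    (hxy : R.r x y) : y ∈ lowerApprox R S :=
  mem_lowerApprox.2 fun z hyz => mem_lowerApprox.1 hx z (R.trans hxy hyz)

theorem rel_of_mem_lowerApprox_insert_of_notMem {S : Finset α} {u x : α}
    (hx : x ∈ lowerApprox R (insert u S)) (hx' : x ∉ lowerApprox R S) : R.r x u := by
  by_contra hxu
  refine hx' (mem_lowerApprox.2 fun y hxy => ?_)
  rcases mem_insert.1 (mem_lowerApprox.1 hx y hxy) with rfl | hy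
  · exact absurd hxy hxu
  · exact hy

theorem eq_of_mem_lowerApprox_insert_of_rel {S : Finset α} {u v : α}
    (hu : u ∈ lowerApprox R (insert u S)) (huv : R.r u v) (hv : v ∉ S) : v = u :=
  (mem_insert.1 (mem_lowerApprox.1 hu v huv)).resolve_right hv

theorem exists_rel_mem_sdiff_of_not_lowerApprox_insert_subset {X I₁ I₂ : Finset α}
    (h₁ : lowerApprox R I₁ ⊆ X) (h₂ : lowerApprox R I₂ ⊆ X) {u : α} (hu : u ∈ I₂ \ I₁)
    (hu' : ¬ lowerApprox R (insert u I₁) ⊆ X) :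
    ∃ y ∈ I₁ \ I₂, R.r u y ∧ u ∈ lowerApprox R (insert u I₁) := by
  obtain ⟨x, hx, hxX⟩ := not_subset.1 hu'
  have hxu : R.r x u := rel_of_mem_lowerApprox_insert_of_notMem hx fun h => hxX (h₁ h)
  obtain ⟨y, hxy, hy₂⟩ : ∃ y, R.r x y ∧ y ∉ I₂ := by
    by_contra! h
    exact hxX (h₂ (mem_lowerApprox.2 h))
  have hy : y ∈ insert u I₁ := mem_lowerApprox.1 hx y hxy
  have hyu : y ≠ u := by rintro rfl; exact hy₂ (mem_sdiff.1 hu).1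
  exact ⟨y, mem_sdiff.2 ⟨(mem_insert.1 hy).resolve_left hyu, hy₂⟩,
    R.trans (R.symm hxu) hxy, mem_lowerApprox_of_rel hx hxu⟩

end

theorem parametric_family_exchange (R : Setoid α) [DecidableRel R.r] (X : Finset α)
    (I₁ I₂ : Finset α) (h₁ : lowerApprox R I₁ ⊆ X) (h₂ : lowerApprox R I₂ ⊆ X)
    (hcard : I₁.card < I₂.card) :
    ∃ u ∈ I₂ \ I₁, lowerApprox R (insert u I₁) ⊆ X := by
  by_contra! hcon
  choose! f hf hrel hmem using fun u hu =>
    exists_rel_mem_sdiff_of_not_lowerApprox_insert_subset h₁ h₂ hu (hcon u hu)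
  have hinj : Set.InjOn f (I₂ \ I₁ : Finset α) := by
    intro u hu v hv hfuv
    have huv : R.r u v := R.trans (hrel u hu) (R.symm (hfuv ▸ hrel v hv))
    exact (eq_of_mem_lowerApprox_insert_of_rel (hmem u hu) huv (mem_sdiff.1 hv).2).symm
  have hle : (I₂ \ I₁).card ≤ (I₁ \ I₂).card := card_le_card_of_injOn f hf hinj
  exact (card_sdiff_le_card_sdiff_iff.1 hle).not_gt hcard
end

section
/- For any I ⊆ U, R̲(I) ⊆ X if and only if R̲(I \ R̲(X)) = ∅. Hence {I ⊆ U : R̲(I) ⊆ X} = {I ⊆ U : R̲(I \ R̲(X)) = ∅}. -/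
open Finset

variable {α : Type*} [Fintype α] [DecidableEq α]

/-!
The lower approximation `R̲` is an interior operator whose values are unions of `R`-classes.
Saturation gives `R̲(I \ R̲(X)) = R̲(I) \ R̲(X)`, so the right-hand side says `R̲(I) ⊆ R̲(X)`;
since `R̲` is deflationary, monotone and idempotent, this is equivalent to `R̲(I) ⊆ X`.
-/

section LowerApprox

variable {R : Setoid α} [DecidableRel R.r]

theorem lowerApprox_subset (S : Finset α) : lowerApprox R S ⊆ S :=
  fun x hx => mem_lowerApprox.mp hx x (R.refl x)

theorem lowerApprox_mono {S T : Finset α} (h : S ⊆ T) : lowerApprox R S ⊆ lowerApprox R T :=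
  fun _ hx => mem_lowerApprox.mpr fun y hy => h (mem_lowerApprox.mp hx y hy)

theorem mem_lowerApprox_iff_of_rel {S : Finset α} {x y : α} (hxy : R.r x y) :
    x ∈ lowerApprox R S ↔ y ∈ lowerApprox R S := by
  simp only [mem_lowerApprox]
  exact ⟨fun hx z hyz => hx z (R.trans hxy hyz), fun hy z hxz => hy z (R.trans (R.symm hxy) hxz)⟩

theorem lowerApprox_lowerApprox (S : Finset α) : lowerApprox R (lowerApprox R S) = lowerApprox R S :=
  (lowerApprox_subset _).antisymm fun _ hx =>
    mem_lowerApprox.mpr fun _ hxy => (mem_lowerApprox_iff_of_rel hxy).mp hx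

theorem lowerApprox_subset_iff_subset_lowerApprox {S T : Finset α} :
    lowerApprox R S ⊆ T ↔ lowerApprox R S ⊆ lowerApprox R T := by
  refine ⟨fun h => ?_, fun h => h.trans (lowerApprox_subset T)⟩
  rw [← lowerApprox_lowerApprox S]
  exact lowerApprox_mono h

theorem lowerApprox_sdiff_lowerApprox (S T : Finset α) :
    lowerApprox R (S \ lowerApprox R T) = lowerApprox R S \ lowerApprox R T := by
  ext x
  simp only [mem_sdiff, mem_lowerApprox (S := S \ _), mem_lowerApprox (S := S)]
  constructor
  · intro hx
    exact ⟨fun y hxy => (hx y hxy).1, (hx x (R.refl x)).2⟩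
  · rintro ⟨hS, hT⟩ y hxy
    exact ⟨hS y hxy, fun hy => hT ((mem_lowerApprox_iff_of_rel hxy).mpr hy)⟩

end LowerApprox

theorem parametric_family_third_form (R : Setoid α) [DecidableRel R.r] (X : Finset α) :
    ∀ I : Finset α, lowerApprox R I ⊆ X ↔ lowerApprox R (I \ lowerApprox R X) = ∅ := by
  intro I
  rw [lowerApprox_sdiff_lowerApprox, sdiff_eq_empty_iff_subset,
    lowerApprox_subset_iff_subset_lowerApprox]
end

section
/- For the parametric matroid M_X, the rank function satisfies r_{M_X}(Y) = |Y| − f_R(Y \ R̲(X)) for all Y ⊆ U. -/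
/-!
`I` is independent in `M_X` exactly when every class contained in `I` is contained in `X`.
So an independent `I ⊆ Y` must miss at least one point of each class contained in
`Y \ R̲(X)`, and these classes are disjoint, whence `|I| ≤ |Y| - f_R(Y \ R̲(X))`.
Conversely, deleting one representative of each such class from `Y` leaves an independent set.
-/

open Finset

variable {α : Type*} [Fintype α] [DecidableEq α]

/-- The equivalence class of `x` w.r.t. `R`, as a finset. -/
def cls (R : Setoid α) [DecidableRel R.r] (x : α) : Finset α :=
  Finset.univ.filter fun y => R.r x y


/-- The lower approximation number: the number of equivalence classes of `R`
contained in `S`. -/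
def lowerNum (R : Setoid α) [DecidableRel R.r] (S : Finset α) : ℕ :=
  ((Finset.univ.image (cls R)).filter fun P => P ⊆ S).card


open Classical in
/-- The rank of `X` w.r.t. an independence family `𝓘`: the maximum cardinality
of a member of `𝓘` contained in `X`. -/
noncomputable def rank (𝓘 : Finset α → Prop) (X : Finset α) : ℕ :=
  (X.powerset.filter fun I => 𝓘 I).sup Finset.card

namespace ParametricMatroid

variable {β : Type*} [Fintype β] (R : Setoid β) [DecidableRel R.r]

@[simp]
theorem mem_cls {x y : β} : y ∈ cls R x ↔ R.r x y := by
  simp [cls]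

theorem self_mem_cls (x : β) : x ∈ cls R x :=
  (mem_cls R).2 (R.refl x)

theorem cls_eq_of_mem {x y : β} (h : y ∈ cls R x) : cls R y = cls R x := by
  ext z
  simp only [mem_cls] at h ⊢
  exact ⟨R.trans h, R.trans (R.symm h)⟩

variable [DecidableEq β]

theorem mem_lowerApprox {S : Finset β} {x : β} : x ∈ lowerApprox R S ↔ cls R x ⊆ S := by
  simp [lowerApprox, subset_iff]

theorem lowerNum_eq_card_image (S : Finset β) :
    lowerNum R S = ((lowerApprox R S).image (cls R)).card := by
  rw [lowerNum]
  congr 1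
  ext P
  simp only [mem_filter, mem_image, mem_univ, true_and, mem_lowerApprox]
  constructor
  · rintro ⟨⟨x, rfl⟩, hx⟩
    exact ⟨x, hx, rfl⟩
  · rintro ⟨x, hx, rfl⟩
    exact ⟨⟨x, rfl⟩, hx⟩

theorem cls_subset_of_lowerApprox_subset {I X : Finset β} (hI : lowerApprox R I ⊆ X) {x : β}
    (hx : cls R x ⊆ I) : cls R x ⊆ X := fun _ hz =>
  hI ((mem_lowerApprox R).2 (cls_eq_of_mem R hz ▸ hx))

theorem card_add_lowerNum_le {I X Y : Finset β} (hIY : I ⊆ Y) (hI : lowerApprox R I ⊆ X) :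
    I.card + lowerNum R (Y \ lowerApprox R X) ≤ Y.card := by
  set T := Y \ lowerApprox R X
  have hsub : (lowerApprox R T).image (cls R) ⊆ (T \ I).image (cls R) := by
    simp only [subset_iff, mem_image, forall_exists_index, and_imp]
    rintro _ x hxT rfl
    rw [mem_lowerApprox] at hxT
    have hxX : ¬ cls R x ⊆ X := fun h =>
      (mem_sdiff.1 (hxT (self_mem_cls R x))).2 ((mem_lowerApprox R).2 h)
    obtain ⟨y, hy, hyI⟩ := not_subset.1 (mt (cls_subset_of_lowerApprox_subset R hI) hxX)
    exact ⟨y, mem_sdiff.2 ⟨hxT hy, hyI⟩, cls_eq_of_mem R hy⟩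
  have hcard : lowerNum R T ≤ (Y \ I).card :=
    calc lowerNum R T = ((lowerApprox R T).image (cls R)).card := lowerNum_eq_card_image R T
      _ ≤ ((T \ I).image (cls R)).card := card_le_card hsub
      _ ≤ (T \ I).card := card_image_le
      _ ≤ (Y \ I).card := card_le_card (sdiff_subset_sdiff Finset.sdiff_subset le_rfl)
  rw [card_sdiff_of_subset hIY] at hcard
  have := card_le_card hIY
  omega

theorem exists_transversal (T : Finset β) :
    ∃ D ⊆ T, D.card = lowerNum R T ∧ ∀ x, cls R x ⊆ T → ∃ d ∈ D, d ∈ cls R x := by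
  obtain ⟨D, hDT, hinj, himage⟩ := exists_subset_injOn_image_eq_of_surjOn
    (lowerApprox R T : Set β) ((lowerApprox R T).image (cls R)) (by
      rw [coe_image]; exact Set.surjOn_image _ _)
  refine ⟨D, fun d hd => ?_, ?_, fun x hx => ?_⟩
  · exact (mem_lowerApprox R).1 (hDT hd) (self_mem_cls R d)
  · rw [lowerNum_eq_card_image, ← himage, card_image_of_injOn hinj]
  · have : cls R x ∈ D.image (cls R) := himage ▸ mem_image_of_mem _ ((mem_lowerApprox R).2 hx)
    obtain ⟨d, hd, hdx⟩ := mem_image.1 this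
    exact ⟨d, hd, hdx ▸ self_mem_cls R d⟩

theorem lowerApprox_sdiff_transversal_subset {X Y D : Finset β}
    (hD : ∀ x, cls R x ⊆ Y \ lowerApprox R X → ∃ d ∈ D, d ∈ cls R x) :
    lowerApprox R (Y \ D) ⊆ X := by
  intro x hx
  rw [mem_lowerApprox] at hx
  by_contra hxX
  have hxT : cls R x ⊆ Y \ lowerApprox R X := fun y hy => by
    refine mem_sdiff.2 ⟨(mem_sdiff.1 (hx hy)).1, fun hyX => hxX ?_⟩
    rw [mem_lowerApprox, cls_eq_of_mem R hy] at hyX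
    exact hyX (self_mem_cls R x)
  obtain ⟨d, hdD, hdx⟩ := hD x hxT
  exact (mem_sdiff.1 (hx hdx)).2 hdD

end ParametricMatroid

theorem card_le_rank {β : Type*} {𝓘 : Finset β → Prop} {I Y : Finset β} (hIY : I ⊆ Y)
    (hI : 𝓘 I) : I.card ≤ rank 𝓘 Y := by
  classical
  exact le_sup (mem_filter.2 ⟨mem_powerset.2 hIY, hI⟩)

theorem rank_le_of_forall_card_le {β : Type*} {𝓘 : Finset β → Prop} {Y : Finset β} {n : ℕ}
    (h : ∀ I ⊆ Y, 𝓘 I → I.card ≤ n) : rank 𝓘 Y ≤ n := by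
  classical
  exact Finset.sup_le fun I hI => by
    rw [mem_filter, mem_powerset] at hI
    exact h I hI.1 hI.2

open ParametricMatroid in
theorem rank_of_parametric_matroid (R : Setoid α) [DecidableRel R.r] (X : Finset α) :
    ∀ Y : Finset α,
      rank (fun I => lowerApprox R I ⊆ X) Y = Y.card - lowerNum R (Y \ lowerApprox R X) := by
  intro Y
  apply le_antisymm
  · exact rank_le_of_forall_card_le fun I hIY hI =>
      Nat.le_sub_of_add_le (card_add_lowerNum_le R hIY hI)
  · obtain ⟨D, hDT, hDcard, hD⟩ := exists_transversal R (Y \ lowerApprox R X)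
    have hDY : D ⊆ Y := hDT.trans Finset.sdiff_subset
    calc Y.card - lowerNum R (Y \ lowerApprox R X) = (Y \ D).card := by
          rw [card_sdiff_of_subset hDY, hDcard]
      _ ≤ rank (fun I => lowerApprox R I ⊆ X) Y :=
          card_le_rank Finset.sdiff_subset (lowerApprox_sdiff_transversal_subset R hD)
end
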